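/- arXiv:2206.12377 — 5 statements merged into one kernel-verified Lean document; each statement's English description precedes it below -/
import Mathlib

section
/- Let (X,T) be a compact metric space with a homeomorphism T, and let E, F ⊆ X be open sets. Suppose (x₀, x₁, x₂) ∈ X³ is a 3-term Erdős progression (i.e., there is a strictly increasing sequence n₁ < n₂ < ⋯ of positive integers with (T × T)^{nᵢ}(x₀, x₁) → (x₁, x₂)) with x₁ ∈ E and x₂ ∈ F. Then there exists an infinite set B ⊆ {n ∈ ℕ : T^n x₀ ∈ E} such that {b₁ + b₂ : b₁, b₂ ∈ B, b₁ ≠ b₂} ⊆ {n ∈ ℕ : T^n x₀ ∈ F}. -/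
open Filter

/-- `(x₀, x₁, x₂)` is a 3-term Erdős progression for the map `T`: there is a strictly
increasing sequence of positive integers `n₁ < n₂ < ⋯` with
`(T × T)^{nᵢ}(x₀,x₁) → (x₁,x₂)`. -/
def IsErdosProgression {X : Type*} [TopologicalSpace X] (T : X → X)
    (x₀ x₁ x₂ : X) : Prop :=
  ∃ n : ℕ → ℕ, StrictMono n ∧ (∀ i, 0 < n i) ∧
    Tendsto (fun i => ((T^[n i] x₀, T^[n i] x₁) : X × X)) atTop (nhds (x₁, x₂))

/-- Theorem: an Erdős progression `(x₀,x₁,x₂)` with `x₁ ∈ E` and `x₂ ∈ F` produces an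
infinite set `B ⊆ {n : T^n x₀ ∈ E}` whose restricted sumset lies in `{n : T^n x₀ ∈ F}`. -/
theorem erdos_progression_gives_sumset {X : Type*} [MetricSpace X] [CompactSpace X]
    (T : X → X) (hT : IsHomeomorph T) (E F : Set X) (hE : IsOpen E) (hF : IsOpen F)
    (x₀ x₁ x₂ : X) (hprog : IsErdosProgression T x₀ x₁ x₂)
    (hx₁ : x₁ ∈ E) (hx₂ : x₂ ∈ F) :
    ∃ B : Set ℕ, B.Infinite ∧ B ⊆ {n : ℕ | T^[n] x₀ ∈ E} ∧
      ∀ b₁ ∈ B, ∀ b₂ ∈ B, b₁ ≠ b₂ → b₁ + b₂ ∈ {n : ℕ | T^[n] x₀ ∈ F} := by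
  classical
  obtain ⟨n, hmono, hpos, htend⟩ := hprog
  have hcont : ∀ k : ℕ, Continuous (T^[k]) := fun k => hT.continuous.iterate k
  rw [nhds_prod_eq, tendsto_prod_iff'] at htend
  obtain ⟨h1, h2⟩ := htend
  have key : ∀ (s : Finset ℕ) (N : ℕ), ∃ m : ℕ, N < m ∧ T^[m] x₀ ∈ E ∧ T^[m] x₁ ∈ F ∧
      ((∀ b ∈ s, T^[b] x₁ ∈ F) → ∀ b ∈ s, T^[b + m] x₀ ∈ F) := by
    intro s N
    by_cases hyp : ∀ b ∈ s, T^[b] x₁ ∈ F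
    · set U : Set X := E ∩ ⋂ b ∈ (s : Set ℕ), T^[b] ⁻¹' F with hU
      have hUopen : IsOpen U :=
        hE.inter (isOpen_biInter_finset fun b _ => hF.preimage (hcont b))
      have hx₁U : x₁ ∈ U :=
        ⟨hx₁, Set.mem_biInter fun b hb => hyp b hb⟩
      have e1 : ∀ᶠ i in atTop, T^[n i] x₀ ∈ U := h1 (hUopen.mem_nhds hx₁U)
      have e2 : ∀ᶠ i in atTop, T^[n i] x₁ ∈ F := h2 (hF.mem_nhds hx₂)
      have e3 : ∀ᶠ i in atTop, N < n i :=
        eventually_atTop.mpr ⟨N + 1, fun i hi => lt_of_lt_of_le hi (hmono.le_apply)⟩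
      obtain ⟨i, hiU, hiF, hiN⟩ := (e1.and (e2.and e3)).exists
      refine ⟨n i, hiN, hiU.1, hiF, fun _ b hb => ?_⟩
      rw [Function.iterate_add_apply]
      exact Set.mem_iInter₂.mp hiU.2 b hb
    · have e1 : ∀ᶠ i in atTop, T^[n i] x₀ ∈ E := h1 (hE.mem_nhds hx₁)
      have e2 : ∀ᶠ i in atTop, T^[n i] x₁ ∈ F := h2 (hF.mem_nhds hx₂)
      have e3 : ∀ᶠ i in atTop, N < n i :=
        eventually_atTop.mpr ⟨N + 1, fun i hi => lt_of_lt_of_le hi (hmono.le_apply)⟩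
      obtain ⟨i, hiE, hiF, hiN⟩ := (e1.and (e2.and e3)).exists
      exact ⟨n i, hiN, hiE, hiF, fun h => absurd h hyp⟩
  choose! m hm1 hm2 hm3 hm4 using key
  -- recursive construction
  set H : ℕ → ℕ × Finset ℕ := fun k =>
    Nat.rec ((m ∅ 0), {m ∅ 0})
      (fun _ p => (m p.2 p.1, insert (m p.2 p.1) p.2)) k with hH
  have hHsucc : ∀ k, H (k + 1) = (m (H k).2 (H k).1, insert (m (H k).2 (H k).1) (H k).2) :=
    fun k => rfl
  have hH0 : H 0 = ((m ∅ 0), {m ∅ 0}) := rfl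
  set g : ℕ → ℕ := fun k => (H k).1 with hg
  have inv : ∀ k, (H k).1 ∈ (H k).2 ∧ (∀ b ∈ (H k).2, b ≤ (H k).1) ∧
      (∀ b ∈ (H k).2, T^[b] x₀ ∈ E ∧ T^[b] x₁ ∈ F) ∧
      (∀ a ∈ (H k).2, ∀ b ∈ (H k).2, a ≠ b → T^[a + b] x₀ ∈ F) := by
    intro k
    induction k with
    | zero =>
      rw [hH0]
      refine ⟨Finset.mem_singleton_self _, ?_, ?_, ?_⟩
      · intro b hb; rw [Finset.mem_singleton] at hb; omega
      · intro b hb; rw [Finset.mem_singleton] at hb; subst hb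
        exact ⟨hm2 ∅ 0, hm3 ∅ 0⟩
      · intro a ha b hb hne
        rw [Finset.mem_singleton] at ha hb; subst ha; subst hb; exact absurd rfl hne
    | succ k ih =>
      obtain ⟨ih1, ih2, ih3, ih4⟩ := ih
      have hF1 : ∀ b ∈ (H k).2, T^[b] x₁ ∈ F := fun b hb => (ih3 b hb).2
      have hlt : (H k).1 < m (H k).2 (H k).1 := hm1 _ _
      rw [hHsucc]
      refine ⟨Finset.mem_insert_self _ _, ?_, ?_, ?_⟩
      · intro b hb
        rcases Finset.mem_insert.mp hb with rfl | hb
        · exact le_refl _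
        · exact le_of_lt (lt_of_le_of_lt (ih2 b hb) hlt)
      · intro b hb
        rcases Finset.mem_insert.mp hb with rfl | hb
        · exact ⟨hm2 _ _, hm3 _ _⟩
        · exact ih3 b hb
      · intro a ha b hb hne
        rcases Finset.mem_insert.mp ha with rfl | ha <;>
          rcases Finset.mem_insert.mp hb with rfl | hb
        · exact absurd rfl hne
        · rw [add_comm]; exact hm4 _ _ hF1 b hb
        · exact hm4 _ _ hF1 a ha
        · exact ih4 a ha b hb hne
  have hgmono : StrictMono g := by
    apply strictMono_nat_of_lt_succ
    intro k
    show (H k).1 < (H (k + 1)).1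
    rw [hHsucc]
    exact hm1 _ _
  have hsub : Monotone fun k => (H k).2 := by
    apply monotone_nat_of_le_succ
    intro k
    rw [hHsucc]
    exact Finset.subset_insert _ _
  have hmem : ∀ i j, i ≤ j → g i ∈ (H j).2 := fun i j hij => hsub hij (inv i).1
  refine ⟨Set.range g, Set.infinite_range_of_injective hgmono.injective, ?_, ?_⟩
  · rintro _ ⟨k, rfl⟩
    exact ((inv k).2.2.1 _ (inv k).1).1
  · rintro _ ⟨i, rfl⟩ _ ⟨j, rfl⟩ hne
    exact (inv (max i j)).2.2.2 _ (hmem i _ (le_max_left i j)) _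
      (hmem j _ (le_max_right i j)) hne
end

section
/- With notation as above, let π₂ : X × X → X be projection onto the second coordinate. Then for every s ∈ X, (1/2)(π₂σ_s + T(π₂σ_s)) = μ, where π₂σ_s denotes the pushforward of σ_s under π₂ and T(ν) denotes the pushforward of ν under T. -/
/-!
Write `ξ_c` for the image of `m` under `z ↦ c + 2z`. As the first factor of
`η_{π s + z} × η_{π s + 2z}` is a probability measure, the second marginal of `σ_s` is the
mixture `∫ η_w dξ_{π s}(w)`, and by the a.e. equivariance `T η_w = η_{w+α}` (uniqueness of
disintegrations) its image under `T` is the same mixture over `R ξ_{π s}`. The measure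
`(ξ_c + R ξ_c)/2` is `R`-invariant because `R² ξ_c = ξ_c`, hence equals `m` by unique ergodicity
of the rotation; and mixing `η` over `m` gives back `μ`.
-/

open MeasureTheory ProbabilityTheory
open scoped ENNReal BoundedContinuousFunction

lemma map_add_right_nsmul_eq_self {M : Type*} [AddMonoid M] [MeasurableSpace M]
    [MeasurableAdd M] {ν : Measure M} {α : M} (h : ν.map (· + α) = ν) (n : ℕ) :
    ν.map (· + n • α) = ν := by
  have hα : MeasurePreserving (· + α) ν ν := ⟨measurable_add_const α, h⟩
  simpa [add_right_iterate] using (hα.iterate n).map_eq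

section Translation

variable {G : Type*} [TopologicalSpace G] [TopologicalSpace.PseudoMetrizableSpace G] [AddGroup G]
  [IsTopologicalAddGroup G] [MeasurableSpace G] [BorelSpace G]

lemma isClosed_setOf_map_add_right_eq (ν : Measure G) [IsFiniteMeasure ν] :
    IsClosed {t : G | ν.map (· + t) = ν} := by
  have key : {t : G | ν.map (· + t) = ν} =
      ⋂ f : G →ᵇ ℝ, {t | ∫ z, f (z + t) ∂ν = ∫ z, f z ∂ν} := by
    ext t
    simp only [Set.mem_ofPred_eq, Set.mem_iInter]
    have hint (f : G →ᵇ ℝ) : ∫ z, f z ∂(ν.map (· + t)) = ∫ z, f (z + t) ∂ν :=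
      integral_map (measurable_add_const t).aemeasurable f.continuous.aestronglyMeasurable
    refine ⟨fun h f => by rw [← hint, h], fun h => ?_⟩
    exact ext_of_forall_integral_eq_of_IsFiniteMeasure fun f => by rw [hint, h]
  rw [key]
  refine isClosed_iInter fun f => isClosed_eq ?_ continuous_const
  exact continuous_of_dominated (bound := fun _ => ‖f‖)
    (fun t => (f.continuous.comp (continuous_add_const t)).aestronglyMeasurable)
    (fun t => ae_of_all _ fun z => f.norm_coe_le_norm _) (integrable_const _)
    (ae_of_all _ fun z => f.continuous.comp (continuous_const_add z))

end Translation

section UniqueErgodicity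

variable {Z : Type*} [TopologicalSpace Z] [CompactSpace Z]
  [TopologicalSpace.PseudoMetrizableSpace Z] [AddCommGroup Z] [IsTopologicalAddGroup Z]
  [MeasurableSpace Z] [BorelSpace Z]
  {m : Measure Z} [IsProbabilityMeasure m] [m.IsAddHaarMeasure] {α : Z}

theorem Ergodic.eq_of_map_add_right_eq_self (hR : Ergodic (· + α) m) (ν : Measure Z)
    [IsProbabilityMeasure ν] (hν : ν.map (· + α) = ν) : ν = m := by
  have hdense : DenseRange (· • α : ℕ → Z) := by
    refine denseRange_zsmul_iff_nsmul.1 (DenseRange.zsmul_of_ergodic_add_left (μ := m) ?_)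
    simpa only [add_comm α] using hR
  have hinv (t : Z) : ν.map (· + t) = ν := by
    refine (isClosed_setOf_map_add_right_eq ν).closure_subset_iff.2 ?_ (hdense t)
    rintro _ ⟨n, rfl⟩
    exact map_add_right_nsmul_eq_self hν n
  have : ν.IsAddLeftInvariant := ⟨fun t => by simpa only [add_comm t] using hinv t⟩
  have hsmul := Measure.isAddInvariant_eq_smul_of_compactSpace ν m
  have hc : Measure.addHaarScalarFactor ν m = 1 := by
    simpa using (congrArg (· Set.univ) hsmul).symm
  rw [hsmul, hc, one_smul]

theorem Ergodic.map_double_add_map_double_add_right (hR : Ergodic (· + α) m) (c : Z) :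
    m.map (fun z => c + (z + z)) + (m.map (fun z => c + (z + z))).map (· + α) =
      (2 : ℝ≥0∞) • m := by
  set ξ := m.map (fun z => c + (z + z))
  have hdouble : Measurable fun z : Z => c + (z + z) := by fun_prop
  have hξ : (ξ.map (· + α)).map (· + α) = ξ := by
    have hfun : ((· + α) ∘ (· + α)) ∘ (fun z => c + (z + z)) =
        (fun z => c + (z + z)) ∘ (· + α) := by
      ext z; simp only [Function.comp_apply]; abel
    rw [Measure.map_map (by fun_prop) (by fun_prop), Measure.map_map (by fun_prop) hdouble,
      hfun, ← Measure.map_map hdouble (by fun_prop), map_add_right_eq_self]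
  have : IsProbabilityMeasure ξ := Measure.isProbabilityMeasure_map hdouble.aemeasurable
  have : IsProbabilityMeasure ((2 : ℝ≥0∞)⁻¹ • (ξ + ξ.map (· + α))) := by
    have : IsProbabilityMeasure (ξ.map (· + α)) :=
      Measure.isProbabilityMeasure_map (by fun_prop)
    constructor
    simp [ENNReal.inv_two_add_inv_two]
  have hinv := hR.eq_of_map_add_right_eq_self ((2 : ℝ≥0∞)⁻¹ • (ξ + ξ.map (· + α))) (by
    rw [Measure.map_smul, Measure.map_add _ _ (by fun_prop), hξ, add_comm])
  rw [← hinv, smul_smul, ENNReal.mul_inv_cancel two_ne_zero ENNReal.ofNat_ne_top, one_smul]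

end UniqueErgodicity

section Kernel

variable {α β γ : Type*} [MeasurableSpace α] [MeasurableSpace β] [MeasurableSpace γ]

lemma comp_map_eq_comap_comp (μ : Measure α) (κ : Kernel β γ) {f : α → β} (hf : Measurable f) :
    κ ∘ₘ μ.map f = κ.comap f hf ∘ₘ μ := by
  ext s hs
  rw [Measure.bind_apply hs κ.aemeasurable, Measure.bind_apply hs (Kernel.aemeasurable _),
    lintegral_map (κ.measurable_coe hs) hf]
  rfl

lemma map_snd_bind_prod (μ : Measure α) (κ : Kernel α β) [IsMarkovKernel κ] (η : Kernel α γ)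
    [IsSFiniteKernel η] : (μ.bind fun a => (κ a).prod (η a)).map Prod.snd = η ∘ₘ μ := by
  have hprod : (μ.bind fun a => (κ a).prod (η a)) = (κ ×ₖ η) ∘ₘ μ := by
    congr 1
    ext1 a
    exact (Kernel.prod_apply κ η a).symm
  rw [hprod, Measure.map_comp _ _ measurable_snd, ← Kernel.snd_eq, Kernel.snd_prod]

end Kernel

section Disintegration

variable {X Z : Type*} [MeasurableSpace X] [MeasurableSpace Z]

def IsDisintegration (μ : Measure X) (π : X → Z) (m : Measure Z) (κ : Kernel Z X) : Prop :=
  ∀ s D : Set _, MeasurableSet s → MeasurableSet D → μ (s ∩ π ⁻¹' D) = ∫⁻ z in D, κ z s ∂m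

variable {μ : Measure X} {π : X → Z} {m : Measure Z} {κ : Kernel Z X}

lemma IsDisintegration.comp_eq (hdis : IsDisintegration μ π m κ) : κ ∘ₘ m = μ := by
  ext s hs
  rw [Measure.bind_apply hs κ.aemeasurable]
  simpa using (hdis s _ hs .univ).symm

lemma IsDisintegration.ae_map_eq_add_right [AddGroup Z] [MeasurableAdd Z]
    [MeasurableSpace.CountableOrCountablyGenerated Z X] [IsFiniteMeasure m] [IsFiniteKernel κ]
    (hdis : IsDisintegration μ π m κ) {T : X → X} (hT : MeasurePreserving T μ μ)
    (hπ : Measurable π) {α : Z} (hα : MeasurePreserving (· + α) m m)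
    (hπT : ∀ x, π (T x) = π x + α) :
    ∀ᵐ z ∂m, (κ z).map T = κ (z + α) := by
  have hcomp : m ⊗ₘ κ.map T = m ⊗ₘ κ.comap (· + α) hα.measurable := by
    refine Measure.ext_prod fun {D A} hD hA => ?_
    set E := (· + -α) ⁻¹' D
    have hE : MeasurableSet E := measurable_add_const _ hD
    have hset : T ⁻¹' A ∩ π ⁻¹' D = T ⁻¹' (A ∩ π ⁻¹' E) := by
      ext x
      simp [E, hπT]
    have hpre : (· + α) ⁻¹' E = D := by
      ext z
      simp [E]
    rw [Measure.compProd_apply_prod hD hA, Measure.compProd_apply_prod hD hA]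
    simp_rw [Kernel.map_apply' κ hT.measurable _ hA, Kernel.comap_apply]
    rw [← hdis _ _ (hT.measurable hA) hD, hset, hT.measure_preimage
      (hA.inter (hπ hE)).nullMeasurableSet, hdis _ _ hA hE, ← hpre,
      hα.setLIntegral_comp_preimage hE (κ.measurable_coe hA)]
  filter_upwards [Kernel.ae_eq_of_compProd_eq hcomp] with z hz
  rwa [Kernel.map_apply κ hT.measurable, Kernel.comap_apply] at hz

end Disintegration

theorem sigma_second_marginal_general
    {X : Type*} [MetricSpace X] [CompactSpace X] [MeasurableSpace X] [BorelSpace X]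
    {Z : Type*} [MetricSpace Z] [CompactSpace Z] [AddCommGroup Z]
    [IsTopologicalAddGroup Z] [MeasurableSpace Z] [BorelSpace Z]
    (μ : Measure X)
    (T : X → X) (hThom : IsHomeomorph T) (hT : Ergodic T μ)
    (m : Measure Z) [IsProbabilityMeasure m] [m.IsAddHaarMeasure]
    (α : Z) (hR : Ergodic (fun z => z + α) m)
    (π : X → Z) (hπcont : Continuous π) (hπT : ∀ x, π (T x) = π x + α)
    -- `η` is a disintegration of `μ` over `π`
    (η : Z → Measure X) (hηprob : ∀ z, IsProbabilityMeasure (η z))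
    (hηmeas : Measurable η)
    (hηdis : ∀ s D : Set _, MeasurableSet s → MeasurableSet D →
      μ (s ∩ π ⁻¹' D) = ∫⁻ z in D, η z s ∂m)
    -- the measure `σ_s = ∫_Z η_{π(s)+z} × η_{π(s)+2z} dm(z)`
    (σ : X → Measure (X × X))
    (hσ : ∀ s : X, σ s = m.bind (fun z => (η (π s + z)).prod (η (π s + (z + z))))) :
    ∀ s : X, (2 : ℝ≥0∞)⁻¹ • ((σ s).map Prod.snd + ((σ s).map Prod.snd).map T) = μ := by
  intro s
  let κ : Kernel Z X := ⟨η, hηmeas⟩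
  have : IsMarkovKernel κ := ⟨hηprob⟩
  have hdis : IsDisintegration μ π m κ := hηdis
  have hTm : Measurable T := hThom.continuous.measurable
  set ξ := m.map (fun z => π s + (z + z))
  have hξ : ξ + ξ.map (· + α) = (2 : ℝ≥0∞) • m := hR.map_double_add_map_double_add_right (π s)
  have hmarg : (σ s).map Prod.snd = κ ∘ₘ ξ := by
    have hdouble : Measurable fun z : Z => π s + (z + z) := by fun_prop
    rw [comp_map_eq_comap_comp _ _ hdouble,
      ← map_snd_bind_prod m (κ.comap (π s + ·) (measurable_const_add _)), hσ]
    rfl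
  have hequiv : ∀ᵐ z ∂m, (κ z).map T = κ (z + α) :=
    hdis.ae_map_eq_add_right hT.toMeasurePreserving hπcont.measurable
      (measurePreserving_add_right m α) hπT
  have hξm : ξ ≪ m := by
    refine (Measure.absolutelyContinuous_of_le (ν := (2 : ℝ≥0∞) • m) ?_).trans
      Measure.smul_absolutelyContinuous
    exact hξ ▸ Measure.le_add_right le_rfl
  have hshift : (κ ∘ₘ ξ).map T = κ ∘ₘ ξ.map (· + α) := by
    rw [Measure.map_comp _ _ hTm, comp_map_eq_comap_comp _ _ (measurable_add_const α)]
    refine Measure.comp_congr ?_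
    filter_upwards [hξm.ae_le hequiv] with z hz
    exact (Kernel.map_apply κ hTm z).trans hz
  rw [hmarg, hshift, ← Measure.comp_add, hξ, Measure.comp_smul, hdis.comp_eq,
    smul_smul, ENNReal.inv_mul_cancel two_ne_zero ENNReal.ofNat_ne_top, one_smul]

/-- for every `s ∈ X`, `(1/2)(π₂σ_s + T(π₂σ_s)) = μ`, where `π₂σ_s` is the
second marginal of `σ_s` and `T ν` denotes the pushforward of `ν` under `T`. -/
theorem sigma_second_marginal
    {X : Type*} [MetricSpace X] [CompactSpace X] [MeasurableSpace X] [BorelSpace X]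
    {Z : Type*} [MetricSpace Z] [CompactSpace Z] [AddCommGroup Z]
    [IsTopologicalAddGroup Z] [MeasurableSpace Z] [BorelSpace Z]
    (μ : Measure X) [IsProbabilityMeasure μ]
    (T : X → X) (hThom : IsHomeomorph T) (hT : Ergodic T μ)
    (m : Measure Z) [IsProbabilityMeasure m] [m.IsAddHaarMeasure]
    (α : Z) (hR : Ergodic (fun z => z + α) m)
    (π : X → Z) (hπcont : Continuous π) (hπT : ∀ x, π (T x) = π x + α)
    (hπm : μ.map π = m)
    -- maximality of the Kronecker factor: every eigenfunction of `T` factors through `π`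
    (hKron : ∀ (f : X → ℂ) (c : ℂ), Measurable f → (∀ᵐ x ∂μ, f (T x) = c * f x) →
      ∃ g : Z → ℂ, Measurable g ∧ ∀ᵐ x ∂μ, f x = g (π x))
    -- `η` is a disintegration of `μ` over `π`
    (η : Z → Measure X) (hηprob : ∀ z, IsProbabilityMeasure (η z))
    (hηmeas : Measurable η)
    (hηdis : ∀ s D : Set _, MeasurableSet s → MeasurableSet D →
      μ (s ∩ π ⁻¹' D) = ∫⁻ z in D, η z s ∂m)
    (hηfiber : ∀ᵐ z ∂m, η z (π ⁻¹' {z}) = 1)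
    -- the measure `σ_s = ∫_Z η_{π(s)+z} × η_{π(s)+2z} dm(z)`
    (σ : X → Measure (X × X))
    (hσ : ∀ s : X, σ s = m.bind (fun z => (η (π s + z)).prod (η (π s + (z + z))))) :
    ∀ s : X, (2 : ℝ≥0∞)⁻¹ • ((σ s).map Prod.snd + ((σ s).map Prod.snd).map T) = μ :=
  sigma_second_marginal_general μ T hThom hT m α hR π hπcont hπT η hηprob hηmeas hηdis σ hσ
end

section
/- Let Z be a compact abelian group with Haar probability measure m, and let R(z) = z + α be an ergodic rotation (i.e., m is ergodic for R). Let 2Z = {z + z : z ∈ Z} with Haar measure ξ. Then Z = 2Z ∪ (2Z + α), and m = (1/2)(ξ + Rξ) if 2Z ≠ Z, while m = ξ if 2Z = Z. In particular, for every w ∈ Z there exists z ∈ Z such that w = 2z or w = 2z + α. -/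
open MeasureTheory
open scoped ENNReal

/-!
Ergodicity of the rotation makes the orbit `ℤ • α` dense. Even multiples of `α` lie in the
compact set `2Z` and odd ones in `2Z + α`, so `Z = 2Z ∪ (2Z + α)`. The image `ξ` of `m` under
doubling is invariant under translation by `2Z`; translating by an element of `2Z + α` swaps `ξ`
and `Rξ`. Hence `(ξ + Rξ) / 2` is a translation invariant probability measure, which by
uniqueness of Haar measure is `m`. If doubling is surjective, it preserves Haar measure: `ξ = m`.
-/

section Doubling

variable (G : Type*) [AddCommGroup G]

def doubleHom : G →+ G :=
  AddMonoidHom.mk' (fun z => z + z) fun a b => add_add_add_comm a b a b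

variable {G} [TopologicalSpace G] [IsTopologicalAddGroup G]

theorem continuous_doubleHom : Continuous (doubleHom G) :=
  continuous_id.add continuous_id

theorem exists_eq_add_self_or_eq_add_self_add_of_denseRange_zsmul [CompactSpace G] [T2Space G]
    {α : G} (hα : DenseRange (fun n : ℤ => n • α)) (w : G) :
    ∃ z, w = z + z ∨ w = z + z + α := by
  set C : Set G := Set.range (fun z : G => z + z) ∪ Set.range (fun z : G => z + z + α)
  have hC : IsClosed C :=
    (isCompact_range continuous_doubleHom).isClosed.union
      (isCompact_range (continuous_doubleHom.add continuous_const)).isClosed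
  have horbit : Set.range (fun n : ℤ => n • α) ⊆ C := by
    rintro _ ⟨n, rfl⟩
    rcases Int.even_or_odd' n with ⟨k, rfl | rfl⟩
    · exact Or.inl ⟨k • α, by simp only [two_mul, add_zsmul]⟩
    · exact Or.inr ⟨k • α, by simp only [two_mul, add_zsmul, one_zsmul]⟩
  have hwC : w ∈ C := closure_minimal horbit hC (hα.closure_range ▸ Set.mem_univ w)
  rcases hwC with ⟨z, hz⟩ | ⟨z, hz⟩
  exacts [⟨z, .inl hz.symm⟩, ⟨z, .inr hz.symm⟩]

end Doubling

namespace MeasureTheory.Measure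

section Translation

variable {G : Type*} [AddCommGroup G] [MeasurableSpace G] [MeasurableAdd G]

theorem map_add_left_map_add_left (ξ : Measure G) (a b : G) :
    (ξ.map (a + ·)).map (b + ·) = ξ.map ((b + a) + ·) := by
  rw [map_map (measurable_const_add b) (measurable_const_add a)]
  congr 1
  funext z
  exact (add_assoc b a z).symm

theorem map_add_left_map_addMonoidHom_of_mem_range {H : Type*} [AddGroup H] [MeasurableSpace H]
    [MeasurableAdd H] (μ : Measure H) [μ.IsAddLeftInvariant] {f : H →+ G} (hf : Measurable f)
    {s : G} (hs : s ∈ f.range) : (μ.map f).map (s + ·) = μ.map f := by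
  obtain ⟨c, rfl⟩ := hs
  rw [map_map (measurable_const_add _) hf]
  conv_rhs => rw [← map_add_left_eq_self μ c]
  rw [map_map hf (measurable_const_add c)]
  congr 1
  funext z
  exact (map_add f c z).symm

theorem isAddLeftInvariant_add_map_add_left (ξ : Measure G) {S : AddSubgroup G}
    (hξ : ∀ s ∈ S, ξ.map (s + ·) = ξ) {α : G} (hα : α + α ∈ S)
    (hcover : ∀ b, b ∈ S ∨ b - α ∈ S) : (ξ + ξ.map (α + ·)).IsAddLeftInvariant := by
  refine ⟨fun b => ?_⟩
  rw [Measure.map_add _ _ (measurable_const_add b), map_add_left_map_add_left]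
  rcases hcover b with hb | hb
  · rw [add_comm b α, ← map_add_left_map_add_left, hξ b hb]
  · have hbα : b = (b - α) + α := (sub_add_cancel b α).symm
    rw [hbα, add_comm _ α, ← map_add_left_map_add_left, hξ _ hb,
      add_comm α, add_assoc, hξ _ (S.add_mem hb hα), add_comm]

end Translation

theorem isProbabilityMeasure_inv_two_smul_add {X : Type*} [MeasurableSpace X] (μ ν : Measure X)
    [IsProbabilityMeasure μ] [IsProbabilityMeasure ν] :
    IsProbabilityMeasure ((2 : ℝ≥0∞)⁻¹ • (μ + ν)) :=
  ⟨by simp only [smul_apply, add_apply, measure_univ, smul_eq_mul, mul_add, mul_one,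
    ENNReal.inv_two_add_inv_two]⟩

theorem isAddLeftInvariant_eq_of_isProbabilityMeasure {G : Type*} [AddGroup G]
    [TopologicalSpace G] [IsTopologicalAddGroup G] [CompactSpace G] [MeasurableSpace G]
    [BorelSpace G] (μ' μ : Measure G) [μ'.IsAddLeftInvariant] [IsProbabilityMeasure μ']
    [μ.IsAddHaarMeasure] [IsProbabilityMeasure μ] : μ' = μ := by
  have hμ' := isAddInvariant_eq_smul_of_compactSpace μ' μ
  have hc : addHaarScalarFactor μ' μ = 1 := by
    have huniv := congrArg (· Set.univ) hμ'
    simp only [measure_univ, smul_apply, ENNReal.smul_def, smul_eq_mul, mul_one] at huniv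
    exact_mod_cast huniv.symm
  rw [hμ', hc, one_smul]

end MeasureTheory.Measure

/-- for an ergodic rotation `R(z) = z + α` on a compact abelian group `Z`
with Haar probability measure `m`, letting `ξ = (z ↦ z + z)_* m` be the Haar probability
measure of the closed subgroup `2Z = {z + z : z ∈ Z}` (viewed on `Z`), one has
`Z = 2Z ∪ (2Z + α)`; moreover `m = ξ` if `2Z = Z`, and `m = (1/2)(ξ + Rξ)` otherwise. -/
theorem ergodic_rotation_doubling
    {Z : Type*} [MetricSpace Z] [CompactSpace Z] [AddCommGroup Z]
    [IsTopologicalAddGroup Z] [MeasurableSpace Z] [BorelSpace Z]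
    (m : Measure Z) [IsProbabilityMeasure m] [m.IsAddHaarMeasure]
    (α : Z) (hR : Ergodic (fun z => z + α) m)
    (ξ : Measure Z) (hξ : ξ = m.map (fun z => z + z)) :
    (∀ w : Z, ∃ z : Z, w = z + z ∨ w = z + z + α) ∧
    (Set.range (fun z : Z => z + z) = Set.univ → m = ξ) ∧
    (Set.range (fun z : Z => z + z) ≠ Set.univ →
      m = (2 : ℝ≥0∞)⁻¹ • (ξ + ξ.map (fun z => z + α))) := by
  have hrot : (fun z : Z => z + α) = (α + ·) := funext fun z => add_comm z α
  have hdense : DenseRange (fun n : ℤ => n • α) :=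
    DenseRange.zsmul_of_ergodic_add_left (μ := m) (hrot ▸ hR)
  have hcover := exists_eq_add_self_or_eq_add_self_add_of_denseRange_zsmul hdense
  have hξ' : ξ = m.map (doubleHom Z) := hξ
  refine ⟨hcover, fun hsurj => ?_, fun _ => ?_⟩
  · rw [hξ']
    exact ((doubleHom Z).measurePreserving continuous_doubleHom
      (Set.range_eq_univ.mp hsurj) rfl).map_eq.symm
  · have : IsProbabilityMeasure ξ :=
      hξ' ▸ Measure.isProbabilityMeasure_map continuous_doubleHom.measurable.aemeasurable
    have : IsProbabilityMeasure (ξ.map (α + ·)) :=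
      Measure.isProbabilityMeasure_map (measurable_const_add α).aemeasurable
    have := Measure.isProbabilityMeasure_inv_two_smul_add ξ (ξ.map (α + ·))
    have : (ξ + ξ.map (α + ·)).IsAddLeftInvariant :=
      Measure.isAddLeftInvariant_add_map_add_left ξ (S := (doubleHom Z).range)
        (fun s hs => hξ' ▸ Measure.map_add_left_map_addMonoidHom_of_mem_range m
          continuous_doubleHom.measurable hs) ⟨α, rfl⟩
        fun b => by
          obtain ⟨z, rfl | rfl⟩ := hcover b
          exacts [.inl ⟨z, rfl⟩, .inr ⟨z, (add_sub_cancel_right _ _).symm⟩]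
    rw [hrot]
    exact (Measure.isAddLeftInvariant_eq_of_isProbabilityMeasure _ m).symm
end

section
/- Let (X,μ,T) be an ergodic system with a continuous factor map π to its Kronecker factor (Z,m,R), and z ↦ η_z a disintegration of μ over π. Then the map s ↦ σ_s from X to the space of Borel probability measures on X × X (with the weak* topology), where σ_s = ∫_Z η_{π(s)+z} × η_{π(s)+2z} dm(z), is continuous. -/
/-!
For `F, G ∈ C(X, ℝ)` put `φ_F z = ∫ F dη_z`. Then `∫ F ⊗ G dσ_s = I (π s)` with
`I w = ∫ φ_F (w + z) φ_G (w + 2z) dm(z)`. The test functions whose `σ_s`-integral is continuous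
in `s` form a closed subspace of `C(X × X, ℝ)`, and by Stone–Weierstrass the products `F ⊗ G`
span a dense subspace, so it is enough that `I` is continuous.

Continuity of translation in `L²(m)` only gives continuity of `k ↦ I (c + 2k)` for each fixed
`c`, since `z ↦ 2z` need not preserve `m`. Ergodicity of the rotation makes `ℤ • α` dense, so
`Z = 2Z ∪ (α + 2Z)`, this union being closed. Thus `Z ⊕ Z → Z`, `k ↦ 2k` on the first copy and
`k ↦ α + 2k` on the second, is a closed surjection, hence a quotient map, and `I` is continuous.
-/

open MeasureTheory Filter Set Topology ProbabilityTheory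

section WeakConvergence

variable {T Ω : Type*} [TopologicalSpace T] [TopologicalSpace Ω] [MeasurableSpace Ω]

theorem ProbabilityMeasure.continuous_of_forall_continuous_integral [OpensMeasurableSpace Ω]
    {ν : T → ProbabilityMeasure Ω} (h : ∀ g : C(Ω, ℝ), Continuous fun t => ∫ x, g x ∂(ν t)) :
    Continuous ν :=
  continuous_iff_continuousAt.2 fun _ =>
    ProbabilityMeasure.tendsto_iff_forall_integral_tendsto.2 fun f =>
      (h f.toContinuousMap).continuousAt

variable [CompactSpace Ω]

theorem ContinuousMap.norm_integral_le (g : C(Ω, ℝ)) (μ : Measure Ω) [IsProbabilityMeasure μ] :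
    ‖∫ x, g x ∂μ‖ ≤ ‖g‖ := by
  simpa using norm_integral_le_of_norm_le_const (μ := μ) (.of_forall g.norm_coe_le_norm)

variable [OpensMeasurableSpace Ω]

theorem ContinuousMap.integrable (g : C(Ω, ℝ)) (μ : Measure Ω) [IsFiniteMeasure μ] :
    Integrable g μ :=
  g.continuous.integrable_of_hasCompactSupport (.of_compactSpace g)

theorem ContinuousMap.dist_integral_le (g h : C(Ω, ℝ)) (μ : Measure Ω) [IsProbabilityMeasure μ] :
    dist (∫ x, g x ∂μ) (∫ x, h x ∂μ) ≤ dist g h := by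
  rw [dist_eq_norm, dist_eq_norm, ← integral_sub (g.integrable μ) (h.integrable μ)]
  exact (g - h).norm_integral_le μ

def continuousIntegralSubmodule (ν : T → ProbabilityMeasure Ω) : Submodule ℝ C(Ω, ℝ) where
  carrier := {g | Continuous fun t => ∫ x, g x ∂(ν t)}
  zero_mem' := by simpa using continuous_const
  add_mem' {g h} hg hh :=
    (hg.add hh).congr fun _ => (integral_add (g.integrable _) (h.integrable _)).symm
  smul_mem' c g hg := (hg.const_smul c).congr fun _ => (integral_const_mul c _).symm

theorem mem_continuousIntegralSubmodule {ν : T → ProbabilityMeasure Ω} {g : C(Ω, ℝ)} :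
    g ∈ continuousIntegralSubmodule ν ↔ Continuous fun t => ∫ x, g x ∂(ν t) :=
  Iff.rfl

theorem isClosed_continuousIntegralSubmodule (ν : T → ProbabilityMeasure Ω) :
    IsClosed (continuousIntegralSubmodule ν : Set C(Ω, ℝ)) := by
  refine isClosed_iff_frequently.2 fun g hg => ?_
  simp only [SetLike.mem_coe, mem_continuousIntegralSubmodule] at hg ⊢
  refine TendstoUniformly.continuous (F := fun (h : C(Ω, ℝ)) t => ∫ x, h x ∂(ν t)) ?_ hg
  refine Metric.tendstoUniformly_iff.2 fun ε hε => ?_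
  filter_upwards [Metric.ball_mem_nhds g hε] with h hh t
  exact (g.dist_integral_le h _).trans_lt (by rwa [dist_comm])

end WeakConvergence

section SimpleTensors

variable (X Y : Type*) [TopologicalSpace X] [TopologicalSpace Y]

def ContinuousMap.simpleTensors : Submonoid C(X × Y, ℝ) where
  carrier := {h | ∃ (F : C(X, ℝ)) (G : C(Y, ℝ)), F.comp .fst * G.comp .snd = h}
  one_mem' := ⟨1, 1, by ext; simp⟩
  mul_mem' := by
    rintro _ _ ⟨F, G, rfl⟩ ⟨F', G', rfl⟩
    refine ⟨F * F', G * G', ?_⟩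
    ext
    simp only [ContinuousMap.mul_apply, ContinuousMap.comp_apply]
    ring

variable {X Y}

theorem ContinuousMap.mul_mem_simpleTensors (F : C(X, ℝ)) (G : C(Y, ℝ)) :
    F.comp .fst * G.comp .snd ∈ simpleTensors X Y :=
  ⟨F, G, rfl⟩

end SimpleTensors

section SimpleTensorsMetric

variable {X Y : Type*} [MetricSpace X] [MetricSpace Y]

theorem ContinuousMap.separatesPoints_adjoin_simpleTensors :
    (Algebra.adjoin ℝ (simpleTensors X Y : Set C(X × Y, ℝ))).SeparatesPoints := by
  intro p q hpq
  by_cases h₁ : p.1 = q.1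
  · have h₂ : p.2 ≠ q.2 := fun h₂ => hpq (Prod.ext h₁ h₂)
    refine ⟨_, ⟨_, Algebra.subset_adjoin (SetLike.mem_coe.2 <|
      mul_mem_simpleTensors 1 ⟨(dist · q.2), continuous_id.dist continuous_const⟩), rfl⟩, ?_⟩
    simpa using h₂
  · refine ⟨_, ⟨_, Algebra.subset_adjoin (SetLike.mem_coe.2 <|
      mul_mem_simpleTensors ⟨(dist · q.1), continuous_id.dist continuous_const⟩ 1), rfl⟩, ?_⟩
    simpa using h₁

variable [CompactSpace X] [CompactSpace Y]

theorem ContinuousMap.dense_span_simpleTensors :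
    Dense (Submodule.span ℝ (simpleTensors X Y : Set C(X × Y, ℝ)) : Set C(X × Y, ℝ)) := by
  have hclosure := congrArg ((↑) : Subalgebra ℝ C(X × Y, ℝ) → Set C(X × Y, ℝ))
    (subalgebra_topologicalClosure_eq_top_of_separatesPoints _
      separatesPoints_adjoin_simpleTensors)
  rw [Subalgebra.topologicalClosure_coe, ← Subalgebra.coe_toSubmodule, Algebra.adjoin_eq_span,
    Submonoid.closure_eq] at hclosure
  exact dense_iff_closure_eq.2 hclosure

end SimpleTensorsMetric

theorem ProbabilityMeasure.continuous_of_continuous_integral_mul {T X Y : Type*}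
    [TopologicalSpace T] [MetricSpace X] [CompactSpace X] [MeasurableSpace X] [BorelSpace X]
    [MetricSpace Y] [CompactSpace Y] [MeasurableSpace Y] [BorelSpace Y]
    {ν : T → ProbabilityMeasure (X × Y)}
    (h : ∀ (F : C(X, ℝ)) (G : C(Y, ℝ)),
      Continuous fun t => ∫ p : X × Y, F p.1 * G p.2 ∂(ν t)) :
    Continuous ν := by
  have hspan : Submodule.span ℝ (ContinuousMap.simpleTensors X Y : Set C(X × Y, ℝ)) ≤
      continuousIntegralSubmodule ν :=
    Submodule.span_le.2 <| by rintro _ ⟨F, G, rfl⟩; exact h F G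
  refine continuous_of_forall_continuous_integral fun g => ?_
  exact (isClosed_continuousIntegralSubmodule ν).closure_subset_iff.2 hspan
    (ContinuousMap.dense_span_simpleTensors g)

theorem ProbabilityTheory.integral_mul_comp_prod {Z X Y : Type*} [MeasurableSpace Z]
    [MeasurableSpace X] [MeasurableSpace Y] {μ : Measure Z} {κ₁ : Kernel Z X} {κ₂ : Kernel Z Y}
    [IsSFiniteKernel κ₁] [IsSFiniteKernel κ₂] {F : X → ℝ} {G : Y → ℝ}
    (hFG : Integrable (fun p => F p.1 * G p.2) ((κ₁ ×ₖ κ₂) ∘ₘ μ)) :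
    ∫ p, F p.1 * G p.2 ∂((κ₁ ×ₖ κ₂) ∘ₘ μ) = ∫ z, (∫ x, F x ∂κ₁ z) * ∫ y, G y ∂κ₂ z ∂μ := by
  rw [Measure.comp_eq_comp_const_apply] at hFG ⊢
  simp_rw [Kernel.integral_comp hFG, Kernel.prod_apply, integral_prod_mul, Kernel.const_apply]

theorem continuous_integral_comp_add_right_mul {G : Type*} [TopologicalSpace G] [AddGroup G]
    [IsTopologicalAddGroup G] [MeasurableSpace G] [BorelSpace G]
    {μ : Measure G} [μ.IsAddRightInvariant] [IsLocallyFiniteMeasure μ] [μ.InnerRegularCompactLTTop]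
    {φ ψ : G → ℝ} (hφ : MemLp φ 2 μ) (hψ : MemLp ψ 2 μ) :
    Continuous fun k => ∫ z, φ (z + k) * ψ z ∂μ := by
  have hτ (k : G) : MeasurePreserving (ContinuousMap.addRight k) μ μ :=
    measurePreserving_add_right μ k
  have hτc : Continuous (ContinuousMap.addRight : G → C(G, G)) :=
    (ContinuousMap.mk (fun p : G × G => p.2 + p.1) (by fun_prop)).curry.continuous
  have hshift : Continuous fun k => Lp.compMeasurePreserving _ (hτ k) (hφ.toLp φ) :=
    continuous_const.compMeasurePreservingLp hτc hτ ENNReal.ofNat_ne_top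
  refine (hshift.inner (𝕜 := ℝ) continuous_const (g := fun _ => hψ.toLp ψ)).congr fun k => ?_
  rw [L2.inner_def]
  refine integral_congr_ae ?_
  filter_upwards [Lp.coeFn_compMeasurePreserving (hφ.toLp φ) (hτ k), hψ.coeFn_toLp,
    (hτ k).quasiMeasurePreserving.ae_eq_comp hφ.coeFn_toLp] with z h1 h2 h3
  rw [RCLike.inner_apply, conj_trivial, h1, h2, h3, mul_comm]
  rfl

section Doubling

variable {Z : Type*} [TopologicalSpace Z] [AddCommGroup Z] [IsTopologicalAddGroup Z]

def doublingCover (α : Z) : Z ⊕ Z → Z :=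
  Sum.elim (fun k => k + k) (fun k => α + (k + k))

theorem continuous_doublingCover (α : Z) : Continuous (doublingCover α) :=
  continuous_sum_dom.2 ⟨continuous_id.add continuous_id,
    continuous_const.add (continuous_id.add continuous_id)⟩

variable [CompactSpace Z] [T2Space Z]

theorem surjective_doublingCover {α : Z} (hα : DenseRange fun n : ℤ => n • α) :
    Function.Surjective (doublingCover α) := by
  have hclosed : IsClosed (range (doublingCover α)) :=
    (isCompact_range (continuous_doublingCover α)).isClosed
  have hsub : range (fun n : ℤ => n • α) ⊆ range (doublingCover α) := by
    rintro _ ⟨n, rfl⟩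
    obtain ⟨j, rfl | rfl⟩ := Int.even_or_odd' n
    · exact ⟨.inl (j • α), by simp [doublingCover, two_mul, add_zsmul]⟩
    · exact ⟨.inr (j • α), by simp [doublingCover, two_mul, add_zsmul, add_comm]⟩
  rw [← range_eq_univ, ← hclosed.closure_eq, (hα.mono hsub).closure_eq]

theorem isQuotientMap_doublingCover {α : Z} (hα : DenseRange fun n : ℤ => n • α) :
    IsQuotientMap (doublingCover α) :=
  (continuous_doublingCover α).isClosedMap.isQuotientMap (continuous_doublingCover α)
    (surjective_doublingCover hα)

variable [MeasurableSpace Z] [BorelSpace Z] {m : Measure Z} [m.IsAddHaarMeasure]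

theorem continuous_integral_mul_comp_add_double {α : Z} (hα : Ergodic (· + α) m)
    {φ ψ : Z → ℝ} (hφ : MemLp φ 2 m) (hψ : Measurable ψ) {C : ℝ} (hψC : ∀ z, ‖ψ z‖ ≤ C) :
    Continuous fun w => ∫ z, φ (w + z) * ψ (w + (z + z)) ∂m := by
  set I := fun w => ∫ z, φ (w + z) * ψ (w + (z + z)) ∂m
  have hcoset (c : Z) : Continuous fun k => I (c + (k + k)) := by
    have hψc : MemLp (fun z => ψ (z + z - c)) 2 m := by
      refine .of_bound (hψ.comp ?_).aestronglyMeasurable C (.of_forall fun z => hψC _)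
      exact (by fun_prop : Continuous fun z : Z => z + z - c).measurable
    refine (continuous_integral_comp_add_right_mul hφ hψc).congr fun k => ?_
    rw [← integral_add_right_eq_self _ (c + k)]
    congr! 4 with z <;> abel
  have hdense : DenseRange fun n : ℤ => n • α :=
    .zsmul_of_ergodic_add_left (μ := m) (by simpa only [add_comm] using hα)
  rw [(isQuotientMap_doublingCover hdense).continuous_iff, continuous_sum_dom]
  exact ⟨by simpa [Function.comp_def, doublingCover] using hcoset 0, hcoset α⟩

end Doubling

theorem sigma_continuous_general
    {X : Type*} [MetricSpace X] [CompactSpace X] [MeasurableSpace X] [BorelSpace X]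
    {Z : Type*} [MetricSpace Z] [CompactSpace Z] [AddCommGroup Z]
    [IsTopologicalAddGroup Z] [MeasurableSpace Z] [BorelSpace Z]
    (m : Measure Z) [m.IsAddHaarMeasure]
    (α : Z) (hR : Ergodic (fun z => z + α) m)
    (π : X → Z) (hπcont : Continuous π)
    (η : Z → Measure X) (hηprob : ∀ z, IsProbabilityMeasure (η z))
    (hηmeas : Measurable η)
    -- `σ_s = ∫_Z η_{π(s)+z} × η_{π(s)+2z} dm(z)`, as a probability measure
    (σ : X → ProbabilityMeasure (X × X))
    (hσ : ∀ s : X, (σ s : Measure (X × X)) =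
      m.bind (fun z => (η (π s + z)).prod (η (π s + (z + z))))) :
    Continuous σ := by
  let κ : Kernel Z X := ⟨η, hηmeas⟩
  have : IsMarkovKernel κ := ⟨hηprob⟩
  have hmeas (F : C(X, ℝ)) : Measurable fun z => ∫ x, F x ∂κ z :=
    F.continuous.stronglyMeasurable.integral_kernel.measurable
  have hbound (F : C(X, ℝ)) (z : Z) : ‖∫ x, F x ∂κ z‖ ≤ ‖F‖ := F.norm_integral_le _
  refine ProbabilityMeasure.continuous_of_continuous_integral_mul fun F G => ?_
  have hI := continuous_integral_mul_comp_add_double hR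
    (.of_bound (hmeas F).aestronglyMeasurable ‖F‖ (.of_forall (hbound F))) (hmeas G) (hbound G)
  refine (hI.comp hπcont).congr fun s => ?_
  have hσs : (σ s : Measure (X × X)) = (κ.comap (π s + ·) (by fun_prop) ×ₖ
      κ.comap (fun z => π s + (z + z)) (by fun_prop)) ∘ₘ m := by
    rw [hσ s]
    congr with z : 1
    simp [Kernel.prod_apply, κ]
  have hint : Integrable (fun p : X × X => F p.1 * G p.2) (σ s) :=
    (F.comp .fst * G.comp .snd).integrable _
  rw [hσs] at hint ⊢
  exact (integral_mul_comp_prod hint).symm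

/-- the map `s ↦ σ_s` is continuous from `X` to the space of Borel
probability measures on `X × X` with the weak* topology. -/
theorem sigma_continuous
    {X : Type*} [MetricSpace X] [CompactSpace X] [MeasurableSpace X] [BorelSpace X]
    {Z : Type*} [MetricSpace Z] [CompactSpace Z] [AddCommGroup Z]
    [IsTopologicalAddGroup Z] [MeasurableSpace Z] [BorelSpace Z]
    (μ : Measure X) [IsProbabilityMeasure μ]
    (T : X → X) (hThom : IsHomeomorph T) (hT : Ergodic T μ)
    (m : Measure Z) [IsProbabilityMeasure m] [m.IsAddHaarMeasure]
    (α : Z) (hR : Ergodic (fun z => z + α) m)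
    (π : X → Z) (hπcont : Continuous π) (hπT : ∀ x, π (T x) = π x + α)
    (hπm : μ.map π = m)
    -- maximality of the Kronecker factor: every eigenfunction of `T` factors through `π`
    (hKron : ∀ (f : X → ℂ) (c : ℂ), Measurable f → (∀ᵐ x ∂μ, f (T x) = c * f x) →
      ∃ g : Z → ℂ, Measurable g ∧ ∀ᵐ x ∂μ, f x = g (π x))
    -- `η` is a disintegration of `μ` over `π`
    (η : Z → Measure X) (hηprob : ∀ z, IsProbabilityMeasure (η z))
    (hηmeas : Measurable η)
    (hηdis : ∀ s D : Set _, MeasurableSet s → MeasurableSet D →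
      μ (s ∩ π ⁻¹' D) = ∫⁻ z in D, η z s ∂m)
    (hηfiber : ∀ᵐ z ∂m, η z (π ⁻¹' {z}) = 1)
    -- `σ_s = ∫_Z η_{π(s)+z} × η_{π(s)+2z} dm(z)`, as a probability measure
    (σ : X → ProbabilityMeasure (X × X))
    (hσ : ∀ s : X, (σ s : Measure (X × X)) =
      m.bind (fun z => (η (π s + z)).prod (η (π s + (z + z))))) :
    Continuous σ :=
  sigma_continuous_general m α hR π hπcont η hηprob hηmeas σ hσ
end

section
/- Let (X,μ,T) be an ergodic system with a continuous factor map π to its Kronecker factor (Z,m,R) and fixed disintegration z ↦ η_z of μ over π, where translations on Z are isometries. Then there is a sequence δ(j) → 0 of positive reals such that for μ-almost every x ∈ X the following holds: for every neighborhood U of x, lim_{j→∞} m({z ∈ Z : η_z(U) > 0} ∩ B(π(x), δ(j))) / m(B(π(x), δ(j))) = 1. -/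
/-!
Let `(U n)` be a countable basis of `X` and `A n = {z | 0 < η z (U n)}`. The disintegration
identity gives `π x ∈ A n` for a.e. `x ∈ U n`, so it suffices that a.e. point of each `A n` is a
density point of `A n` along one sequence of radii. By Tonelli and invariance of `m`,
`∫_{A} m (Aᶜ ∩ B(z, δ)) dm(z) = ∫_{B(0, δ)} m {z ∈ A | z + u ∉ A} dm(u)`, and the integrand is
small for small `u` because translation is continuous in measure. Choosing `δ j` so that it is
at most `2⁻ʲ` on `B(0, δ j)` for every `n ≤ j` makes the normalized defects
`m (A nᶜ ∩ B(z, δ j)) / m (B(z, δ j))` summable in `L¹(A n)`, hence a.e. tending to zero.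
-/

open MeasureTheory Filter Metric Set
open scoped ENNReal symmDiff Topology

theorem tendsto_measure_preimage_add_right_symmDiff {G : Type*} [TopologicalSpace G] [AddGroup G]
    [ContinuousAdd G] [R1Space G] [MeasurableSpace G] [BorelSpace G] {μ : Measure G}
    [μ.IsAddRightInvariant] [IsFiniteMeasure μ] [μ.InnerRegularCompactLTTop] {A : Set G}
    (hA : MeasurableSet A) :
    Tendsto (fun u => μ (((· + u) ⁻¹' A) ∆ A)) (𝓝 0) (𝓝 0) := by
  let f : C(G × G, G) := ⟨fun p => p.2 + p.1, by fun_prop⟩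
  have hf : ∀ u, ⇑(f.curry u) = (· + u) := fun _ => rfl
  have := tendsto_measure_symmDiff_preimage_nhds_zero (f.curry.continuous.tendsto 0)
    (.of_forall fun u => hf u ▸ measurePreserving_add_right μ u)
    (hf 0 ▸ measurePreserving_add_right μ 0) hA.nullMeasurableSet (measure_ne_top μ A)
  simpa only [hf, add_zero, preimage_id'] using this

theorem tendsto_measure_inter_div_of_tendsto_measure_compl_inter_div {α ι : Type*}
    [MeasurableSpace α] {μ : Measure α} [IsFiniteMeasure μ] {l : Filter ι} {A : Set α}
    {B : ι → Set α} (hA : MeasurableSet A) (hB : ∀ i, μ (B i) ≠ 0)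
    (h : Tendsto (fun i => μ (Aᶜ ∩ B i) / μ (B i)) l (𝓝 0)) :
    Tendsto (fun i => μ (A ∩ B i) / μ (B i)) l (𝓝 1) := by
  have hsplit : ∀ i, μ (A ∩ B i) / μ (B i) = 1 - μ (Aᶜ ∩ B i) / μ (B i) := fun i => by
    refine ENNReal.eq_sub_of_add_eq (ENNReal.div_ne_top (measure_ne_top _ _) (hB i)) ?_
    rw [ENNReal.div_add_div_same, inter_comm A, inter_comm Aᶜ, ← sdiff_eq,
      measure_inter_add_sdiff _ hA, ENNReal.div_self (hB i) (measure_ne_top _ _)]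
  simp_rw [hsplit]
  simpa using ENNReal.Tendsto.sub tendsto_const_nhds h (.inl ENNReal.one_ne_top)

theorem exists_seq_radius_forall_le_of_tendsto {Y : Type*} [PseudoMetricSpace Y] {x : Y}
    {g : ℕ → Y → ℝ≥0∞} (hg : ∀ n, Tendsto (g n) (𝓝 x) (𝓝 0)) {ε : ℕ → ℝ≥0∞}
    (hε : ∀ j, 0 < ε j) :
    ∃ δ : ℕ → ℝ, (∀ j, 0 < δ j) ∧ Tendsto δ atTop (𝓝 0) ∧
      ∀ n j, n ≤ j → ∀ y ∈ ball x (δ j), g n y ≤ ε j := by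
  have hr : ∀ j, ∃ r > 0, ∀ y ∈ ball x r, ∀ n ∈ Iic j, g n y ≤ ε j := fun j =>
    eventually_nhds_iff_ball.1 <| (eventually_all_finite (finite_Iic j)).2 fun n _ =>
      (hg n).eventually (ge_mem_nhds (hε j))
  choose r hr0 hr using hr
  refine ⟨fun j => min (r j) (1 / (j + 1)), fun j => lt_min (hr0 j) (by positivity), ?_,
    fun n j hnj y hy => hr j y (ball_subset_ball (min_le_left _ _) hy) n hnj⟩
  exact tendsto_of_tendsto_of_tendsto_of_le_of_le tendsto_const_nhds
    tendsto_one_div_add_atTop_nhds_zero_nat (fun j => (lt_min (hr0 j) (by positivity)).le)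
    (fun j => min_le_right _ _)

theorem ae_pos_measure_of_mem {X Z : Type*} [MeasurableSpace X] [MeasurableSpace Z]
    {μ : Measure X} {m : Measure Z} {π : X → Z} {η : Z → Measure X} {s : Set X}
    (hη : Measurable fun z => η z s)
    (hdis : ∀ D, MeasurableSet D → μ (s ∩ π ⁻¹' D) = ∫⁻ z in D, η z s ∂m) :
    ∀ᵐ x ∂μ, x ∈ s → 0 < η (π x) s := by
  have hD : MeasurableSet {z | η z s = 0} := hη (measurableSet_singleton 0)
  have hnull : μ (s ∩ π ⁻¹' {z | η z s = 0}) = 0 := by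
    rw [hdis _ hD, setLIntegral_congr_fun hD fun z hz => hz, lintegral_zero]
  refine ae_iff.2 (measure_mono_null (fun x hx => ?_) hnull)
  obtain ⟨hxs, hx0⟩ := Classical.not_imp.1 hx
  exact ⟨hxs, nonpos_iff_eq_zero.1 (not_lt.1 hx0)⟩

section BallDensity

variable {Z : Type*} [MetricSpace Z] [AddCommGroup Z] [IsIsometricVAdd Z Z]
  [MeasurableSpace Z] [BorelSpace Z] [ContinuousAdd Z] {m : Measure Z} [m.IsAddLeftInvariant]

theorem measure_ball_eq_measure_ball_zero (z : Z) (δ : ℝ) : m (ball z δ) = m (ball 0 δ) := by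
  rw [← measure_preimage_add m z, preimage_add_left_ball, neg_add_cancel]

theorem measure_inter_ball_eq_restrict_preimage {S : Set Z} (hS : MeasurableSet S)
    (z : Z) (δ : ℝ) :
    m (S ∩ ball z δ) = m.restrict (ball 0 δ) ((z + ·) ⁻¹' S) := by
  rw [Measure.restrict_apply (measurable_const_add z hS), ← measure_preimage_add m z,
    preimage_inter, preimage_add_left_ball, neg_add_cancel]

variable [SecondCountableTopology Z]

theorem measurable_measure_inter_ball [SFinite m] {S : Set Z} (hS : MeasurableSet S) (δ : ℝ) :
    Measurable fun z => m (S ∩ ball z δ) := by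
  simp_rw [measure_inter_ball_eq_restrict_preimage hS]
  exact measurable_measure_prodMk_left (measurable_add hS)

theorem setLIntegral_measure_inter_ball [SFinite m] (A : Set Z) {S : Set Z} (hS : MeasurableSet S)
    (δ : ℝ) :
    ∫⁻ z in A, m (S ∩ ball z δ) ∂m = ∫⁻ u in ball 0 δ, m ((· + u) ⁻¹' S ∩ A) ∂m := by
  have hP : MeasurableSet ((fun p : Z × Z => p.1 + p.2) ⁻¹' S) := measurable_add hS
  simp_rw [measure_inter_ball_eq_restrict_preimage hS,
    ← Measure.restrict_apply (measurable_add_const _ hS)]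
  exact (Measure.prod_apply hP).symm.trans (Measure.prod_apply_symm hP)

theorem ae_tendsto_measure_compl_inter_ball_div [IsFiniteMeasure m] [m.IsOpenPosMeasure]
    {A : Set Z} (hA : MeasurableSet A) {δ : ℕ → ℝ} (hδ : ∀ j, 0 < δ j)
    {ε : ℕ → ℝ≥0∞} (hε : ∑' j, ε j ≠ ∞)
    (hsmall : ∀ j, ∀ u ∈ ball (0 : Z) (δ j), m ((· + u) ⁻¹' Aᶜ ∩ A) ≤ ε j) :
    ∀ᵐ z ∂m, z ∈ A →
      Tendsto (fun j => m (Aᶜ ∩ ball z (δ j)) / m (ball z (δ j))) atTop (𝓝 0) := by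
  set c : ℕ → ℝ≥0∞ := fun j => m (ball 0 (δ j))
  have hc : ∀ j, c j ≠ 0 := fun j => (measure_ball_pos m 0 (hδ j)).ne'
  have hmeas : ∀ j, Measurable fun z => m (Aᶜ ∩ ball z (δ j)) / c j := fun j =>
    (measurable_measure_inter_ball hA.compl _).div_const _
  have hint : ∀ j, ∫⁻ z in A, m (Aᶜ ∩ ball z (δ j)) / c j ∂m ≤ ε j := fun j =>
    calc ∫⁻ z in A, m (Aᶜ ∩ ball z (δ j)) / c j ∂m
        = (∫⁻ u in ball 0 (δ j), m ((· + u) ⁻¹' Aᶜ ∩ A) ∂m) / c j := by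
          simp_rw [div_eq_mul_inv]
          rw [lintegral_mul_const' _ _ (ENNReal.inv_ne_top.2 (hc j)),
            setLIntegral_measure_inter_ball A hA.compl]
      _ ≤ (∫⁻ _ in ball 0 (δ j), ε j ∂m) / c j :=
          ENNReal.div_le_div_right (setLIntegral_mono' measurableSet_ball (hsmall j)) _
      _ = ε j := by
          rw [setLIntegral_const, ENNReal.mul_div_cancel_right (hc j) (measure_ne_top _ _)]
  have hfinite : ∀ᵐ z ∂m.restrict A, ∑' j, m (Aᶜ ∩ ball z (δ j)) / c j < ∞ := by
    refine ae_lt_top (.tsum hmeas) (ne_top_of_le_ne_top hε ?_)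
    rw [lintegral_tsum fun j => (hmeas j).aemeasurable]
    exact ENNReal.tsum_le_tsum hint
  filter_upwards [(ae_restrict_iff' hA).1 hfinite] with z hz hzA
  simpa only [measure_ball_eq_measure_ball_zero z] using
    ENNReal.tendsto_atTop_zero_of_tsum_ne_top (hz hzA).ne

theorem exists_seq_ae_tendsto_measure_inter_ball_div [IsFiniteMeasure m] [m.IsOpenPosMeasure]
    [m.InnerRegularCompactLTTop] {A : ℕ → Set Z} (hA : ∀ n, MeasurableSet (A n)) :
    ∃ δ : ℕ → ℝ, (∀ j, 0 < δ j) ∧ Tendsto δ atTop (𝓝 0) ∧ ∀ᵐ z ∂m, ∀ n, z ∈ A n →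
      Tendsto (fun j => m (A n ∩ ball z (δ j)) / m (ball z (δ j))) atTop (𝓝 1) := by
  have hsmall : ∀ n, Tendsto (fun u => m ((· + u) ⁻¹' (A n)ᶜ ∩ A n)) (𝓝 0) (𝓝 0) := fun n =>
    tendsto_of_tendsto_of_tendsto_of_le_of_le tendsto_const_nhds
      (tendsto_measure_preimage_add_right_symmDiff (hA n)) (fun _ => zero_le)
      fun _ => measure_mono fun _ hx => Or.inr ⟨hx.2, hx.1⟩
  obtain ⟨δ, hδ0, hδ, hδsmall⟩ := exists_seq_radius_forall_le_of_tendsto hsmall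
    (ε := fun j => 2⁻¹ ^ j) fun j => ENNReal.pow_pos (by norm_num) j
  refine ⟨δ, hδ0, hδ, ae_all_iff.2 fun n => ?_⟩
  have hsum : ∑' j, (2⁻¹ : ℝ≥0∞) ^ j ≠ ∞ := by
    simp [ENNReal.tsum_geometric]
  -- Borel–Cantelli along the tail `j ≥ n`, where the radius `δ j` is adapted to `A n`.
  filter_upwards [ae_tendsto_measure_compl_inter_ball_div (hA n) (fun j => hδ0 (j + n)) hsum
    fun j u hu => (hδsmall n (j + n) le_add_self u hu).trans
      (pow_le_pow_right_of_le_one' (by norm_num) le_self_add)] with z hz hzA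
  rw [← tendsto_add_atTop_iff_nat n]
  exact tendsto_measure_inter_div_of_tendsto_measure_compl_inter_div (hA n)
    (fun j => (measure_ball_pos m z (hδ0 _)).ne') (hz hzA)

end BallDensity

theorem density_point_property_general
    {X : Type*} [MetricSpace X] [CompactSpace X] [MeasurableSpace X] [BorelSpace X]
    {Z : Type*} [MetricSpace Z] [CompactSpace Z] [AddCommGroup Z]
    [IsTopologicalAddGroup Z] [MeasurableSpace Z] [BorelSpace Z]
    (μ : Measure X)
    (m : Measure Z) [m.IsAddHaarMeasure]
    (π : X → Z) (hπcont : Continuous π)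
    (hπm : μ.map π = m)
    -- `η` is a disintegration of `μ` over `π`
    (η : Z → Measure X)
    (hηmeas : Measurable η)
    (hηdis : ∀ s D : Set _, MeasurableSet s → MeasurableSet D →
      μ (s ∩ π ⁻¹' D) = ∫⁻ z in D, η z s ∂m)
    -- translations on `Z` are isometries
    (hiso : ∀ w : Z, Isometry (fun z : Z => z + w)) :
    ∃ δ : ℕ → ℝ, (∀ j, 0 < δ j) ∧ Tendsto δ atTop (nhds 0) ∧
      ∀ᵐ x ∂μ, ∀ U : Set X, IsOpen U → x ∈ U →
        Tendsto (fun j =>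
            m ({z : Z | 0 < η z U} ∩ Metric.ball (π x) (δ j)) /
              m (Metric.ball (π x) (δ j)))
          atTop (nhds 1) := by
  have : IsIsometricVAdd Z Z := ⟨fun w => by simpa only [vadd_eq_add, add_comm w] using hiso w⟩
  obtain ⟨U, hU⟩ := TopologicalSpace.exists_seq_basis X
  have hUmeas : ∀ n, MeasurableSet (U n) := fun n => (hU.isOpen (mem_range_self n)).measurableSet
  have hηU : ∀ n, Measurable fun z => η z (U n) := fun n =>
    (Measure.measurable_coe (hUmeas n)).comp hηmeas
  obtain ⟨δ, hδ0, hδ, hdensity⟩ := exists_seq_ae_tendsto_measure_inter_ball_div (m := m)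
    fun n => measurableSet_lt measurable_const (hηU n)
  have hpos : ∀ᵐ x ∂μ, ∀ n, x ∈ U n → 0 < η (π x) (U n) :=
    ae_all_iff.2 fun n => ae_pos_measure_of_mem (hηU n) (hηdis _ · (hUmeas n))
  have hpull : ∀ {p : Z → Prop}, (∀ᵐ z ∂m, p z) → ∀ᵐ x ∂μ, p (π x) := fun h =>
    ae_of_ae_map hπcont.aemeasurable (hπm ▸ h)
  refine ⟨δ, hδ0, hδ, ?_⟩
  filter_upwards [hpos, hpull hdensity] with x hxpos hxdens V hV hxV
  obtain ⟨_, ⟨n, rfl⟩, hxn, hnV⟩ := hU.exists_subset_of_mem_open hxV hV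
  refine tendsto_of_tendsto_of_tendsto_of_le_of_le (hxdens n (hxpos n hxn)) tendsto_const_nhds
    (fun j => ?_) fun j => ?_
  · exact ENNReal.div_le_div_right
      (measure_mono (inter_subset_inter_left _ fun z hz => hz.trans_le (measure_mono hnV))) _
  · exact ENNReal.div_le_of_le_mul (by rw [one_mul]; exact measure_mono inter_subset_right)

/-- density-point property: there is a sequence `δ(j) → 0` of positive
reals such that for `μ`-a.e. `x`, for every neighborhood `U` of `x`, the proportion of
the ball `B(π(x), δ(j))` consisting of `z` with `η_z(U) > 0` tends to `1`. -/
theorem density_point_property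
    {X : Type*} [MetricSpace X] [CompactSpace X] [MeasurableSpace X] [BorelSpace X]
    {Z : Type*} [MetricSpace Z] [CompactSpace Z] [AddCommGroup Z]
    [IsTopologicalAddGroup Z] [MeasurableSpace Z] [BorelSpace Z]
    (μ : Measure X) [IsProbabilityMeasure μ]
    (T : X → X) (hThom : IsHomeomorph T) (hT : Ergodic T μ)
    (m : Measure Z) [IsProbabilityMeasure m] [m.IsAddHaarMeasure]
    (α : Z) (hR : Ergodic (fun z => z + α) m)
    (π : X → Z) (hπcont : Continuous π) (hπT : ∀ x, π (T x) = π x + α)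
    (hπm : μ.map π = m)
    -- maximality of the Kronecker factor: every eigenfunction of `T` factors through `π`
    (hKron : ∀ (f : X → ℂ) (c : ℂ), Measurable f → (∀ᵐ x ∂μ, f (T x) = c * f x) →
      ∃ g : Z → ℂ, Measurable g ∧ ∀ᵐ x ∂μ, f x = g (π x))
    -- `η` is a disintegration of `μ` over `π`
    (η : Z → Measure X) (hηprob : ∀ z, IsProbabilityMeasure (η z))
    (hηmeas : Measurable η)
    (hηdis : ∀ s D : Set _, MeasurableSet s → MeasurableSet D →
      μ (s ∩ π ⁻¹' D) = ∫⁻ z in D, η z s ∂m)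
    (hηfiber : ∀ᵐ z ∂m, η z (π ⁻¹' {z}) = 1)
    -- translations on `Z` are isometries
    (hiso : ∀ w : Z, Isometry (fun z : Z => z + w)) :
    ∃ δ : ℕ → ℝ, (∀ j, 0 < δ j) ∧ Tendsto δ atTop (nhds 0) ∧
      ∀ᵐ x ∂μ, ∀ U : Set X, IsOpen U → x ∈ U →
        Tendsto (fun j =>
            m ({z : Z | 0 < η z U} ∩ Metric.ball (π x) (δ j)) /
              m (Metric.ball (π x) (δ j)))
          atTop (nhds 1) :=
  density_point_property_general μ m π hπcont hπm η hηmeas hηdis hiso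
end
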